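/- arXiv:2604.24032 — 3 statements merged into one kernel-verified Lean document; each statement's English description precedes it below -/
import Mathlib

section
/- Let Y₁, …, Y_n (n ≥ 2) be i.i.d. random variables with values in a measurable space E, h : E × E → ℝ a measurable, symmetric, bounded kernel, θ = E[h(Y₁,Y₂)], g(y) = E[h(y,Y₁)], ψ(y) = 2(g(y) − θ), σ₁² = Var(g(Y₁)), σ₂² = Var(h(Y₁,Y₂)), and U_n = (binom(n,2))⁻¹ Σ_{1≤i<k≤n} h(Y_i,Y_k). Then the difference between the U-statistic and its Hájek projection satisfies E[(U_n − θ − n⁻¹ Σ_{i=1}^n ψ(Y_i))²] = 2(σ₂² − 2σ₁²)/(n(n−1)); consequently E[(√n (U_n − θ) − n^{−1/2} Σ_{i=1}^n ψ(Y_i))²] = 2(σ₂² − 2σ₁²)/(n−1), which tends to 0 as n → ∞, so √n (U_n − θ) equals n^{−1/2} Σ_{i=1}^n ψ(Y_i) up to a remainder tending to 0 in L². -/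
open MeasureTheory ProbabilityTheory Filter Finset

/-!
Write `k(x, y) = h(x, y) + θ - g(x) - g(y)` for the second-order Hoeffding term of `h`, so that
`h(x, y) - θ = ψ(x)/2 + ψ(y)/2 + k(x, y)`. Summing over pairs shows that
`U_n - θ - n⁻¹ ∑ ψ(Y_i) = binom(n,2)⁻¹ ∑_{i<m} k(Y_i, Y_m)`.

The kernel `k` is degenerate: `∫ k(x, y) dν(y) = 0` for every `x`. Hence if some index occurs
exactly once in a product `k(Y_a, Y_b) k(Y_c, Y_d)`, integrating that variable out first (Fubini,
by independence) gives expectation zero. So the `k(Y_i, Y_m)`, `i < m`, are orthogonal in `L²`, and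
the second moment of their sum is `binom(n,2) E[k(Y₁, Y₂)²]`. The same argument makes
`h(Y₁, Y₂) - θ = k(Y₁, Y₂) + (g(Y₁) - θ) + (g(Y₂) - θ)` an orthogonal decomposition, whence
`E[k(Y₁, Y₂)²] = σ₂² - 2σ₁²`.
-/

section Orthogonality

variable {Ω : Type*} [MeasurableSpace Ω] {P : Measure Ω}

theorem integral_add_sq_of_integral_mul_eq_zero {A B : Ω → ℝ} (hA : MemLp A 2 P)
    (hB : MemLp B 2 P) (hAB : ∫ ω, A ω * B ω ∂P = 0) :
    ∫ ω, (A ω + B ω) ^ 2 ∂P = ∫ ω, A ω ^ 2 ∂P + ∫ ω, B ω ^ 2 ∂P := by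
  have hsq : ∀ ω, (A ω + B ω) ^ 2 = A ω ^ 2 + B ω ^ 2 + 2 * (A ω * B ω) := fun ω => by ring
  have hA2 : Integrable (fun ω => A ω ^ 2) P := hA.integrable_sq
  have hB2 : Integrable (fun ω => B ω ^ 2) P := hB.integrable_sq
  have hAB' : Integrable (fun ω => 2 * (A ω * B ω)) P := (hA.integrable_mul hB).const_mul 2
  simp_rw [hsq]
  rw [integral_add (f := fun ω => A ω ^ 2 + B ω ^ 2) (hA2.add hB2) hAB', integral_add hA2 hB2,
    integral_const_mul, hAB]
  ring

theorem integral_sum_sq_of_orthogonal {ι : Type*} (s : Finset ι) {X : ι → Ω → ℝ}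
    (hX : ∀ i ∈ s, MemLp (X i) 2 P)
    (horth : ∀ i ∈ s, ∀ j ∈ s, i ≠ j → ∫ ω, X i ω * X j ω ∂P = 0) :
    ∫ ω, (∑ i ∈ s, X i ω) ^ 2 ∂P = ∑ i ∈ s, ∫ ω, X i ω ^ 2 ∂P := by
  have hint : ∀ i ∈ s, ∀ j ∈ s, Integrable (fun ω => X i ω * X j ω) P :=
    fun i hi j hj => (hX i hi).integrable_mul (hX j hj)
  simp_rw [sq, sum_mul_sum]
  rw [integral_finsetSum _ fun i hi => integrable_finsetSum _ fun j hj => hint i hi j hj]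
  refine sum_congr rfl fun i hi => ?_
  rw [integral_finsetSum _ fun j hj => hint i hi j hj,
    sum_eq_single_of_mem i hi fun j hj hji => horth i hi j hj (Ne.symm hji)]

end Orthogonality

section Bounded

variable {α : Type*} [MeasurableSpace α] {μ : Measure α} [IsFiniteMeasure μ] {f : α → ℝ} {C : ℝ}

theorem Measurable.integrable_of_norm_le (hf : Measurable f) (hC : ∀ x, ‖f x‖ ≤ C) :
    Integrable f μ :=
  .of_bound hf.aestronglyMeasurable C (ae_of_all _ hC)

theorem Measurable.memLp_of_norm_le (hf : Measurable f) (hC : ∀ x, ‖f x‖ ≤ C) (p : ENNReal) :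
    MemLp f p μ :=
  .of_bound hf.aestronglyMeasurable C (ae_of_all _ hC)

end Bounded

section Independence

variable {Ω E F : Type*} [MeasurableSpace Ω] [MeasurableSpace E] [MeasurableSpace F]
  {P : Measure Ω} [IsProbabilityMeasure P]

theorem integral_comp_eq_zero_of_indepFun {X : Ω → E} {W : Ω → F} (hX : Measurable X)
    (hW : Measurable W) (hXW : IndepFun X W P) {φ : E → F → ℝ}
    (hφ : Measurable (Function.uncurry φ)) {C : ℝ} (hφC : ∀ x w, ‖φ x w‖ ≤ C)
    (hφ0 : ∀ w, ∫ x, φ x w ∂(P.map X) = 0) :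
    ∫ ω, φ (X ω) (W ω) ∂P = 0 := by
  have hlaw : P.map (fun ω => (X ω, W ω)) = (P.map X).prod (P.map W) :=
    (indepFun_iff_map_prod_eq_prod_map_map hX.aemeasurable hW.aemeasurable).1 hXW
  calc ∫ ω, φ (X ω) (W ω) ∂P
      = ∫ p, Function.uncurry φ p ∂((P.map X).prod (P.map W)) := by
        rw [← hlaw, integral_map (hX.prodMk hW).aemeasurable hφ.aestronglyMeasurable]
        rfl
    _ = ∫ w, ∫ x, φ x w ∂(P.map X) ∂(P.map W) :=
        integral_prod_symm _ (hφ.integrable_of_norm_le fun p => hφC p.1 p.2)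
    _ = 0 := by simp [hφ0]

end Independence

section HoeffdingKernel

variable {E : Type*} {h : E → E → ℝ} {g : E → ℝ} {θ C : ℝ}

def hoeffdingSecondOrder (h : E → E → ℝ) (g : E → ℝ) (θ : ℝ) (x y : E) : ℝ :=
  h x y + θ - g x - g y

theorem hoeffdingSecondOrder_comm (hs : ∀ x y, h x y = h y x) (x y : E) :
    hoeffdingSecondOrder h g θ x y = hoeffdingSecondOrder h g θ y x := by
  simp only [hoeffdingSecondOrder, hs x y]
  ring

theorem norm_hoeffdingSecondOrder_le (hC : ∀ x y, ‖h x y‖ ≤ C) (hgC : ∀ x, ‖g x‖ ≤ C)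
    (hθC : ‖θ‖ ≤ C) (x y : E) : ‖hoeffdingSecondOrder h g θ x y‖ ≤ 4 * C := by
  unfold hoeffdingSecondOrder
  linarith [norm_sub_le (h x y + θ - g x) (g y), norm_sub_le (h x y + θ) (g x),
    norm_add_le (h x y) θ, hC x y, hgC x, hgC y]

variable [MeasurableSpace E] {ν : Measure E}

theorem measurable_hoeffdingSecondOrder (hh : Measurable (Function.uncurry h))
    (hg : Measurable g) : Measurable (Function.uncurry (hoeffdingSecondOrder h g θ)) := by
  unfold hoeffdingSecondOrder
  fun_prop

theorem measurable_of_integral_eq [SFinite ν] (hh : Measurable (Function.uncurry h))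
    (hg : ∀ x, ∫ y, h x y ∂ν = g x) : Measurable g := by
  rw [show g = fun x => ∫ y, h x y ∂ν from funext fun x => (hg x).symm]
  exact (hh.stronglyMeasurable.integral_prod_right' (ν := ν)).measurable

variable [IsProbabilityMeasure ν]

theorem norm_integral_le_of_forall_norm_le {f : E → ℝ} (hf : ∀ x, ‖f x‖ ≤ C) :
    ‖∫ x, f x ∂ν‖ ≤ C := by
  simpa using norm_integral_le_of_norm_le_const (μ := ν) (ae_of_all _ hf)

theorem integral_hoeffdingSecondOrder_right_eq_zero (hh : Measurable (Function.uncurry h))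
    (hC : ∀ x y, ‖h x y‖ ≤ C) (hg : ∀ x, ∫ y, h x y ∂ν = g x) (hgθ : ∫ x, g x ∂ν = θ)
    (x : E) : ∫ y, hoeffdingSecondOrder h g θ x y ∂ν = 0 := by
  have hhx : Integrable (h x) ν := hh.of_uncurry_left.integrable_of_norm_le (hC x)
  have hgi : Integrable g ν := (measurable_of_integral_eq hh hg).integrable_of_norm_le fun x =>
    hg x ▸ norm_integral_le_of_forall_norm_le (hC x)
  unfold hoeffdingSecondOrder
  rw [integral_sub (by exact (hhx.add (integrable_const θ)).sub (integrable_const (g x))) hgi,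
    integral_sub (by exact hhx.add (integrable_const θ)) (integrable_const (g x)),
    integral_add hhx (integrable_const θ), hg, hgθ]
  simp

end HoeffdingKernel

theorem sum_range_sum_range_add {R : Type*} [CommRing R] (b : ℕ → R) (n : ℕ) :
    ∑ m ∈ range n, ∑ i ∈ range m, (b i + b m) = (n - 1) * ∑ i ∈ range n, b i := by
  induction n with
  | zero => simp
  | succ n ih =>
    rw [sum_range_succ, ih, sum_add_distrib, sum_const, card_range, sum_range_succ b, nsmul_eq_mul]
    push_cast
    ring

theorem ustat_sub_hajek_eq {E : Type*} (h : E → E → ℝ) (g : E → ℝ) (θ : ℝ) (y : ℕ → E) {n : ℕ}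
    (hn : 2 ≤ n) :
    (n.choose 2 : ℝ)⁻¹ * ∑ m ∈ range n, ∑ i ∈ range m, h (y i) (y m) - θ -
        (n : ℝ)⁻¹ * ∑ i ∈ range n, 2 * (g (y i) - θ) =
      (n.choose 2 : ℝ)⁻¹ *
        ∑ m ∈ range n, ∑ i ∈ range m, hoeffdingSecondOrder h g θ (y i) (y m) := by
  have hsplit : ∀ i m, hoeffdingSecondOrder h g θ (y i) (y m) =
      (h (y i) (y m) + θ) - (g (y i) + g (y m)) := fun i m => by
    unfold hoeffdingSecondOrder; ring
  have hid : ∑ m ∈ range n, (m : ℝ) = n.choose 2 := by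
    rw [← Nat.cast_sum, sum_range_id, Nat.choose_two_right]
  simp_rw [hsplit, sum_sub_distrib]
  rw [sum_range_sum_range_add (fun i => g (y i))]
  simp_rw [← mul_sum, sum_add_distrib, sum_sub_distrib, sum_const, card_range, nsmul_eq_mul,
    ← sum_mul, hid, Nat.cast_choose_two]
  have hn1 : (n : ℝ) - 1 ≠ 0 := by
    rw [sub_ne_zero]; exact_mod_cast (by omega : n ≠ 1)
  field_simp
  ring

theorem sq_sqrt_mul_sub_inv_sqrt_mul {x : ℝ} (hx : 0 ≤ x) (a b : ℝ) :
    (√x * a - (√x)⁻¹ * b) ^ 2 = x * (a - x⁻¹ * b) ^ 2 := by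
  rcases hx.eq_or_lt with rfl | hx
  · simp
  have hs : √x ≠ 0 := (Real.sqrt_pos.2 hx).ne'
  field_simp
  rw [Real.sq_sqrt hx.le]
  ring

section IID

variable {Ω E : Type*} [MeasurableSpace Ω] [MeasurableSpace E] {P : Measure Ω}
  {Y : ℕ → Ω → E} {ν : Measure E}

theorem iIndepFun.indepFun_prodMk₃ (hY : ∀ i, Measurable (Y i)) (hind : iIndepFun Y P)
    {a b c d : ℕ} (hba : b ≠ a) (hbc : b ≠ c) (hbd : b ≠ d) :
    IndepFun (Y b) (fun ω => (Y a ω, Y c ω, Y d ω)) P := by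
  have hST : Disjoint ({b} : Finset ℕ) {a, c, d} := by simp [hba, hbc, hbd]
  exact (hind.indepFun_finset _ _ hST hY).comp (measurable_pi_apply ⟨b, mem_singleton_self b⟩)
    ((measurable_pi_apply ⟨a, by simp⟩).prodMk
      ((measurable_pi_apply ⟨c, by simp⟩).prodMk (measurable_pi_apply ⟨d, by simp⟩)))

theorem integral_comp_eq_integral (hY : ∀ i, Measurable (Y i)) (hlaw : ∀ i, P.map (Y i) = ν)
    {f : E → ℝ} (hf : Measurable f) (i : ℕ) : ∫ ω, f (Y i ω) ∂P = ∫ x, f x ∂ν := by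
  rw [← hlaw i, integral_map (hY i).aemeasurable hf.aestronglyMeasurable]

variable [IsProbabilityMeasure P]

theorem identDistrib_pair (hY : ∀ i, Measurable (Y i)) (hind : iIndepFun Y P)
    (hlaw : ∀ i, P.map (Y i) = ν) {i j k l : ℕ} (hij : i ≠ j) (hkl : k ≠ l) :
    IdentDistrib (fun ω => (Y i ω, Y j ω)) (fun ω => (Y k ω, Y l ω)) P P where
  aemeasurable_fst := ((hY i).prodMk (hY j)).aemeasurable
  aemeasurable_snd := ((hY k).prodMk (hY l)).aemeasurable
  map_eq := by
    rw [(indepFun_iff_map_prod_eq_prod_map_map (hY i).aemeasurable (hY j).aemeasurable).1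
        (hind.indepFun hij),
      (indepFun_iff_map_prod_eq_prod_map_map (hY k).aemeasurable (hY l).aemeasurable).1
        (hind.indepFun hkl), hlaw, hlaw, hlaw, hlaw]

theorem integral_mul_eq_zero_of_integral_right_eq_zero (hY : ∀ i, Measurable (Y i))
    (hind : iIndepFun Y P) (hlaw : ∀ i, P.map (Y i) = ν) {k : E → E → ℝ}
    (hk : Measurable (Function.uncurry k)) {C : ℝ} (hkC : ∀ x y, ‖k x y‖ ≤ C)
    (hk0 : ∀ x, ∫ y, k x y ∂ν = 0) {a b c d : ℕ} (hba : b ≠ a) (hbc : b ≠ c) (hbd : b ≠ d) :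
    ∫ ω, k (Y a ω) (Y b ω) * k (Y c ω) (Y d ω) ∂P = 0 :=
  integral_comp_eq_zero_of_indepFun (φ := fun y z => k z.1 y * k z.2.1 z.2.2) (hY b)
    (by fun_prop) (iIndepFun.indepFun_prodMk₃ hY hind hba hbc hbd) (by fun_prop)
    (fun _ _ => norm_mul_le_of_le (hkC _ _) (hkC _ _))
    fun z => by simp [hlaw, integral_mul_const, hk0]

section DegenerateKernel

variable (hY : ∀ i, Measurable (Y i)) (hind : iIndepFun Y P) (hlaw : ∀ i, P.map (Y i) = ν)
  {k : E → E → ℝ} (hk : Measurable (Function.uncurry k)) {C : ℝ} (hkC : ∀ x y, ‖k x y‖ ≤ C)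
  (hk0 : ∀ x, ∫ y, k x y ∂ν = 0) (hks : ∀ x y, k x y = k y x)
include hY hind hlaw hk hkC hk0 hks

theorem integral_mul_eq_zero_of_pair_ne {i m j l : ℕ} (him : i < m) (hjl : j < l)
    (hne : (i, m) ≠ (j, l)) :
    ∫ ω, k (Y i ω) (Y m ω) * k (Y j ω) (Y l ω) ∂P = 0 := by
  by_cases hm : m ≠ j ∧ m ≠ l
  · exact integral_mul_eq_zero_of_integral_right_eq_zero hY hind hlaw hk hkC hk0 him.ne' hm.1 hm.2
  by_cases hi : i ≠ j ∧ i ≠ l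
  · rw [← integral_mul_eq_zero_of_integral_right_eq_zero hY hind hlaw hk hkC hk0 (a := m)
      him.ne hi.1 hi.2]
    simp_rw [hks (Y i _) (Y m _)]
  exact absurd (by simp only [Prod.mk.injEq]; omega) hne

theorem integral_sum_pairs_sq (n : ℕ) :
    ∫ ω, (∑ m ∈ range n, ∑ i ∈ range m, k (Y i ω) (Y m ω)) ^ 2 ∂P =
      n.choose 2 * ∫ ω, k (Y 0 ω) (Y 1 ω) ^ 2 ∂P := by
  have hsq : ∀ p ∈ (range n).sigma range,
      ∫ ω, k (Y p.2 ω) (Y p.1 ω) ^ 2 ∂P = ∫ ω, k (Y 0 ω) (Y 1 ω) ^ 2 ∂P := fun p hp =>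
    ((identDistrib_pair hY hind hlaw (mem_range.1 (mem_sigma.1 hp).2).ne zero_ne_one).comp
      (hk.pow_const 2)).integral_eq
  simp_rw [sum_sigma']
  rw [integral_sum_sq_of_orthogonal (X := fun p ω => k (Y p.2 ω) (Y p.1 ω)) _
      (fun p _ => Measurable.memLp_of_norm_le (by fun_prop) (fun _ => hkC _ _) 2)
      fun p hp q hq hpq => integral_mul_eq_zero_of_pair_ne hY hind hlaw hk hkC hk0 hks
        (mem_range.1 (mem_sigma.1 hp).2) (mem_range.1 (mem_sigma.1 hq).2) ?_,
    sum_congr rfl hsq, sum_const, card_sigma, nsmul_eq_mul]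
  · simp [sum_range_id, Nat.choose_two_right]
  · contrapose! hpq
    simp_all [Sigma.ext_iff]

theorem integral_add_add_sq_of_degenerate {G : E → ℝ} (hG : Measurable G) {D : ℝ}
    (hGD : ∀ x, ‖G x‖ ≤ D) (hG0 : ∫ x, G x ∂ν = 0) :
    ∫ ω, (k (Y 0 ω) (Y 1 ω) + G (Y 0 ω) + G (Y 1 ω)) ^ 2 ∂P =
      ∫ ω, k (Y 0 ω) (Y 1 ω) ^ 2 ∂P + ∫ ω, G (Y 0 ω) ^ 2 ∂P + ∫ ω, G (Y 1 ω) ^ 2 ∂P := by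
  have horth₁ : ∫ ω, k (Y 0 ω) (Y 1 ω) * G (Y 0 ω) ∂P = 0 :=
    integral_comp_eq_zero_of_indepFun (φ := fun y x => k x y * G x) (hY 1) (hY 0)
      (hind.indepFun one_ne_zero) (by fun_prop) (fun y x => norm_mul_le_of_le (hkC x y) (hGD x))
      fun x => by rw [hlaw, integral_mul_const, hk0, zero_mul]
  have horth₂ : ∫ ω, (k (Y 0 ω) (Y 1 ω) + G (Y 0 ω)) * G (Y 1 ω) ∂P = 0 := by
    refine integral_comp_eq_zero_of_indepFun (φ := fun x y => (k x y + G x) * G y)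
      (hY 0) (hY 1) (hind.indepFun zero_ne_one) (by fun_prop)
      (fun x y => norm_mul_le_of_le (norm_add_le_of_le (hkC x y) (hGD x)) (hGD y)) fun y => ?_
    have hk0' : ∫ x, k x y ∂ν = 0 := by simp_rw [hks _ y, hk0]
    rw [integral_mul_const, integral_add (hk.of_uncurry_right.integrable_of_norm_le
      fun x => hkC x y) (hG.integrable_of_norm_le hGD), hlaw, hk0', hG0]
    simp
  have hkL2 : MemLp (fun ω => k (Y 0 ω) (Y 1 ω)) 2 P :=
    (hk.comp ((hY 0).prodMk (hY 1))).memLp_of_norm_le (fun _ => hkC _ _) 2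
  have hGL2 : ∀ i, MemLp (fun ω => G (Y i ω)) 2 P := fun i =>
    (hG.comp (hY i)).memLp_of_norm_le (fun _ => hGD _) 2
  have hkGL2 : MemLp (fun ω => k (Y 0 ω) (Y 1 ω) + G (Y 0 ω)) 2 P := hkL2.add (hGL2 0)
  rw [integral_add_sq_of_integral_mul_eq_zero hkGL2 (hGL2 1) horth₂,
    integral_add_sq_of_integral_mul_eq_zero hkL2 (hGL2 0) horth₁]

end DegenerateKernel

end IID

section HoeffdingDecomposition

variable {Ω E : Type*} [MeasurableSpace Ω] [MeasurableSpace E] {P : Measure Ω}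
  [IsProbabilityMeasure P] {Y : ℕ → Ω → E} {ν : Measure E} [IsProbabilityMeasure ν]
  {h : E → E → ℝ} {g : E → ℝ} {θ C : ℝ}
  (hY : ∀ i, Measurable (Y i)) (hind : iIndepFun Y P) (hlaw : ∀ i, P.map (Y i) = ν)
  (hh : Measurable (Function.uncurry h)) (hC : ∀ x y, ‖h x y‖ ≤ C)
  (hg : ∀ x, ∫ y, h x y ∂ν = g x)
include hY hind hlaw hh hC hg

theorem integral_eq_integral_comp_pair : ∫ x, g x ∂ν = ∫ ω, h (Y 0 ω) (Y 1 ω) ∂P := by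
  have hgm : Measurable g := measurable_of_integral_eq hh hg
  have hgC : ∀ x, ‖g x‖ ≤ C := fun x => hg x ▸ norm_integral_le_of_forall_norm_le (hC x)
  have hdiff : ∫ ω, h (Y 0 ω) (Y 1 ω) - g (Y 0 ω) ∂P = 0 := by
    refine integral_comp_eq_zero_of_indepFun (φ := fun y x => h x y - g x) (hY 1) (hY 0)
      (hind.indepFun one_ne_zero) (by fun_prop) (fun y x => norm_sub_le_of_le (hC x y) (hgC x))
      fun x => ?_
    rw [hlaw, integral_sub (hh.of_uncurry_left.integrable_of_norm_le (hC x)) (integrable_const _),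
      hg]
    simp
  rw [integral_sub (Measurable.integrable_of_norm_le (by fun_prop) fun ω => hC _ _)
    (Measurable.integrable_of_norm_le (by fun_prop) fun ω => hgC _)] at hdiff
  rw [← integral_comp_eq_integral hY hlaw hgm 0]
  linarith

theorem integral_hoeffdingSecondOrder_sq (hs : ∀ x y, h x y = h y x)
    (hθ : ∫ ω, h (Y 0 ω) (Y 1 ω) ∂P = θ) :
    ∫ ω, hoeffdingSecondOrder h g θ (Y 0 ω) (Y 1 ω) ^ 2 ∂P =
      variance (fun ω => h (Y 0 ω) (Y 1 ω)) P - 2 * variance (fun ω => g (Y 0 ω)) P := by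
  set k := hoeffdingSecondOrder h g θ
  have hgθ : ∫ x, g x ∂ν = θ := (integral_eq_integral_comp_pair hY hind hlaw hh hC hg).trans hθ
  have hgm : Measurable g := measurable_of_integral_eq hh hg
  have hgC : ∀ x, ‖g x‖ ≤ C := fun x => hg x ▸ norm_integral_le_of_forall_norm_le (hC x)
  have hθC : ‖θ‖ ≤ C := hgθ ▸ norm_integral_le_of_forall_norm_le hgC
  have hGC : ∀ x, ‖g x - θ‖ ≤ 2 * C := fun x => by linarith [norm_sub_le (g x) θ, hgC x]
  have hG0 : ∫ x, (g x - θ) ∂ν = 0 := by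
    rw [integral_sub (hgm.integrable_of_norm_le hgC) (integrable_const θ), hgθ]; simp
  have hvarh : variance (fun ω => h (Y 0 ω) (Y 1 ω)) P =
      ∫ ω, (k (Y 0 ω) (Y 1 ω) + (g (Y 0 ω) - θ) + (g (Y 1 ω) - θ)) ^ 2 ∂P := by
    rw [variance_eq_integral (by fun_prop), hθ]
    congr with ω
    simp only [k, hoeffdingSecondOrder]
    ring
  have hvarg : ∀ i, variance (fun ω => g (Y 0 ω)) P = ∫ ω, (g (Y i ω) - θ) ^ 2 ∂P := fun i => by
    rw [variance_eq_integral (by fun_prop), integral_comp_eq_integral hY hlaw hgm, hgθ,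
      integral_comp_eq_integral hY hlaw (f := fun x => (g x - θ) ^ 2) (by fun_prop),
      integral_comp_eq_integral hY hlaw (f := fun x => (g x - θ) ^ 2) (by fun_prop)]
  rw [hvarh, integral_add_add_sq_of_degenerate hY hind hlaw
    (measurable_hoeffdingSecondOrder hh hgm) (norm_hoeffdingSecondOrder_le hC hgC hθC)
    (integral_hoeffdingSecondOrder_right_eq_zero hh hC hg hgθ) (hoeffdingSecondOrder_comm hs)
    (hgm.sub_const θ) hGC hG0, ← hvarg 0, ← hvarg 1]
  ring

theorem integral_ustat_sub_hajek_sq (hs : ∀ x y, h x y = h y x)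
    (hθ : ∫ ω, h (Y 0 ω) (Y 1 ω) ∂P = θ) {n : ℕ} (hn : 2 ≤ n) :
    ∫ ω, ((n.choose 2 : ℝ)⁻¹ * ∑ m ∈ range n, ∑ i ∈ range m, h (Y i ω) (Y m ω) - θ -
        (n : ℝ)⁻¹ * ∑ i ∈ range n, 2 * (g (Y i ω) - θ)) ^ 2 ∂P =
      2 * (variance (fun ω => h (Y 0 ω) (Y 1 ω)) P - 2 * variance (fun ω => g (Y 0 ω)) P) /
        (n * (n - 1)) := by
  have hgθ : ∫ x, g x ∂ν = θ := (integral_eq_integral_comp_pair hY hind hlaw hh hC hg).trans hθ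
  have hgm : Measurable g := measurable_of_integral_eq hh hg
  have hgC : ∀ x, ‖g x‖ ≤ C := fun x => hg x ▸ norm_integral_le_of_forall_norm_le (hC x)
  have hθC : ‖θ‖ ≤ C := hgθ ▸ norm_integral_le_of_forall_norm_le hgC
  simp_rw [ustat_sub_hajek_eq h g θ _ hn, mul_pow, integral_const_mul,
    integral_sum_pairs_sq hY hind hlaw (measurable_hoeffdingSecondOrder hh hgm)
      (norm_hoeffdingSecondOrder_le hC hgC hθC)
      (integral_hoeffdingSecondOrder_right_eq_zero hh hC hg hgθ) (hoeffdingSecondOrder_comm hs),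
    integral_hoeffdingSecondOrder_sq hY hind hlaw hh hC hg hs hθ, Nat.cast_choose_two]
  field_simp

end HoeffdingDecomposition

/-- The degree-2 U-statistic equals its Hájek projection up to an `L²` remainder.
With `θ = E[h(Y₁,Y₂)]`, `g(y) = E[h(y,Y₁)]`, `ψ(y) = 2(g(y) − θ)`, `σ₁² = Var(g(Y₁))`,
`σ₂² = Var(h(Y₁,Y₂))`, and `U_n = (binom(n,2))⁻¹ ∑_{i<k≤n} h(Y_i,Y_k)`, for every `n ≥ 2`:
`E[(U_n − θ − n⁻¹ ∑_{i=1}^n ψ(Y_i))²] = 2(σ₂² − 2σ₁²)/(n(n−1))`, hence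
`E[(√n (U_n − θ) − n^{−1/2} ∑_{i=1}^n ψ(Y_i))²] = 2(σ₂² − 2σ₁²)/(n−1)`, which tends to `0`
as `n → ∞`. -/
theorem ustatistic_hajek_projection_L2
    {Ω E : Type*} [MeasurableSpace Ω] [MeasurableSpace E]
    (P : Measure Ω) [IsProbabilityMeasure P]
    (Y : ℕ → Ω → E) (hYmeas : ∀ i, Measurable (Y i))
    (hYindep : iIndepFun Y P)
    (ν : Measure E) (hYlaw : ∀ i, P.map (Y i) = ν)
    (h : E → E → ℝ) (hmeas : Measurable (Function.uncurry h))
    (hsymm : ∀ x y, h x y = h y x)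
    (hbdd : ∃ C : ℝ, ∀ x y, |h x y| ≤ C)
    (θ : ℝ) (hθ : θ = ∫ ω, h (Y 0 ω) (Y 1 ω) ∂P)
    (g : E → ℝ) (hg : ∀ y, g y = ∫ ω, h y (Y 0 ω) ∂P)
    (ψ : E → ℝ) (hψ : ∀ y, ψ y = 2 * (g y - θ))
    (σ₁sq : ℝ) (hσ₁ : σ₁sq = variance (fun ω => g (Y 0 ω)) P)
    (σ₂sq : ℝ) (hσ₂ : σ₂sq = variance (fun ω => h (Y 0 ω) (Y 1 ω)) P)
    (U : ℕ → Ω → ℝ)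
    (hU : ∀ n ω, U n ω =
      ((n.choose 2 : ℝ))⁻¹ * ∑ k ∈ Finset.range n, ∑ i ∈ Finset.range k, h (Y i ω) (Y k ω)) :
    (∀ n : ℕ, 2 ≤ n →
      (∫ ω, (U n ω - θ - (n : ℝ)⁻¹ * ∑ i ∈ Finset.range n, ψ (Y i ω)) ^ 2 ∂P) =
        2 * (σ₂sq - 2 * σ₁sq) / ((n : ℝ) * ((n : ℝ) - 1)) ∧
      (∫ ω, (Real.sqrt n * (U n ω - θ) -
          (Real.sqrt n)⁻¹ * ∑ i ∈ Finset.range n, ψ (Y i ω)) ^ 2 ∂P) =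
        2 * (σ₂sq - 2 * σ₁sq) / ((n : ℝ) - 1)) ∧
    Tendsto (fun n : ℕ =>
        ∫ ω, (Real.sqrt n * (U n ω - θ) -
          (Real.sqrt n)⁻¹ * ∑ i ∈ Finset.range n, ψ (Y i ω)) ^ 2 ∂P) atTop (nhds 0) := by
  obtain ⟨C, hC⟩ := hbdd
  have : IsProbabilityMeasure ν :=
    hYlaw 0 ▸ Measure.isProbabilityMeasure_map (hYmeas 0).aemeasurable
  have hgν : ∀ x, ∫ y, h x y ∂ν = g x := fun x => by
    rw [hg, integral_comp_eq_integral hYmeas hYlaw hmeas.of_uncurry_left]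
  have hrem : ∀ n : ℕ, 2 ≤ n →
      ∫ ω, (U n ω - θ - (n : ℝ)⁻¹ * ∑ i ∈ range n, ψ (Y i ω)) ^ 2 ∂P =
        2 * (σ₂sq - 2 * σ₁sq) / ((n : ℝ) * ((n : ℝ) - 1)) := fun n hn => by
    simp_rw [hU, hψ, hσ₁, hσ₂]
    exact integral_ustat_sub_hajek_sq hYmeas hYindep hYlaw hmeas hC hgν hsymm hθ.symm hn
  have hscaled : ∀ n : ℕ, 2 ≤ n →
      ∫ ω, (√n * (U n ω - θ) - (√n)⁻¹ * ∑ i ∈ range n, ψ (Y i ω)) ^ 2 ∂P =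
        2 * (σ₂sq - 2 * σ₁sq) / ((n : ℝ) - 1) := fun n hn => by
    simp_rw [sq_sqrt_mul_sub_inv_sqrt_mul n.cast_nonneg, integral_const_mul, hrem n hn]
    field_simp
  refine ⟨fun n hn => ⟨hrem n hn, hscaled n hn⟩, ?_⟩
  exact (tendsto_const_nhds.div_atTop (tendsto_atTop_add_const_right _ (-1)
    tendsto_natCast_atTop_atTop)).congr' (eventually_atTop.2 ⟨2, fun n hn => (hscaled n hn).symm⟩)
end

section
/- Let K ≥ 1, let Y be a random variable with values in {1,…,K}, and let Z₁, Z₂ be i.i.d. random variables with values in {1,…,K}, with Y, Z₁, Z₂ mutually independent. With φ(y,y') = 1{y < y'} + (1/2)·1{y = y'}, p₁(j) = P(Y = j), p₂(j) = P(Z₁ = j), and D = E[φ(Y,Z₁)], the covariance with a shared treated observation satisfies Cov(φ(Y,Z₁), φ(Y,Z₂)) = Σ_{j=1}^{K−1} p₁(j)·(Σ_{l=j}^{K} p₂(l))·(Σ_{l=j+1}^{K} p₂(l)) + (1/4) Σ_{j=1}^{K} p₁(j)·p₂(j)² − D². -/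
/-!
Conditionally on `Y = j`, the comparisons `φ(j, Z₁)` and `φ(j, Z₂)` are independent with common
mean `T j = P(Z > j) + p₂ j / 2`, so the covariance is `∑ⱼ p₁ j (T j - D)² = ∑ⱼ p₁ j (T j)² - D²`.
Finally `(a + b / 2)² = (a + b) a + b² / 4` turns `(T j)²` into `P(Z ≥ j) P(Z > j) + p₂ j² / 4`,
and the term `j = K` of the first sum vanishes because `P(Z > K) = 0`.
-/

open MeasureTheory ProbabilityTheory Finset

/-- The DOOR win/tie kernel on ranks. -/
noncomputable def doorPhi (y y' : ℕ) : ℝ :=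
  (if y < y' then (1 : ℝ) else 0) + (if y = y' then (1 : ℝ) else 0) / 2

/-- Covariance of two real-valued random variables under the measure `P`. -/
noncomputable def cov {Ω : Type*} [MeasurableSpace Ω] (P : Measure Ω) (f g : Ω → ℝ) : ℝ :=
  ∫ ω, (f ω - ∫ ω', f ω' ∂P) * (g ω - ∫ ω', g ω' ∂P) ∂P

section FiniteRange

variable {Ω β : Type*} [MeasurableSpace Ω] {P : Measure Ω}
  [MeasurableSpace β] [MeasurableSingletonClass β]

theorem integral_comp_eq_sum_of_forall_mem [IsFiniteMeasure P] {X : Ω → β} (hX : Measurable X)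
    {S : Finset β} (hXS : ∀ ω, X ω ∈ S) (F : β → ℝ) :
    ∫ ω, F (X ω) ∂P = ∑ x ∈ S, P.real (X ⁻¹' {x}) * F x := by
  have hF : (fun ω => F (X ω)) = fun ω => ∑ x ∈ S, (X ⁻¹' {x}).indicator (fun _ => F x) ω := by
    funext ω
    rw [Finset.sum_eq_single_of_mem (X ω) (hXS ω) fun x _ hx => ?_]
    · simp
    · simp [Ne.symm hx]
  have hfiber (x : β) : MeasurableSet (X ⁻¹' {x}) := hX (measurableSet_singleton x)
  rw [hF, integral_finsetSum _ fun x _ => (integrable_const _).indicator (hfiber x)]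
  simp only [integral_indicator_const _ (hfiber _), smul_eq_mul]

theorem sum_measureReal_preimage_singleton_of_forall_mem [IsProbabilityMeasure P] {X : Ω → β}
    (hX : Measurable X) {S : Finset β} (hXS : ∀ ω, X ω ∈ S) :
    ∑ x ∈ S, P.real (X ⁻¹' {x}) = 1 := by
  simpa using (integral_comp_eq_sum_of_forall_mem (P := P) hX hXS fun _ => 1).symm

theorem ProbabilityTheory.iIndepFun.measureReal_preimage_singleton_three {X₁ X₂ X₃ : Ω → β}
    (h : iIndepFun ![X₁, X₂, X₃] P) (a b c : β) :
    P.real ((fun ω => (X₁ ω, X₂ ω, X₃ ω)) ⁻¹' {(a, b, c)})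
      = P.real (X₁ ⁻¹' {a}) * P.real (X₂ ⁻¹' {b}) * P.real (X₃ ⁻¹' {c}) := by
  have hfiber : (fun ω => (X₁ ω, X₂ ω, X₃ ω)) ⁻¹' {(a, b, c)}
      = ⋂ i ∈ (univ : Finset (Fin 3)), ![X₁, X₂, X₃] i ⁻¹' ![{a}, {b}, {c}] i := by
    ext ω
    simp [Fin.forall_fin_succ]
  have := h.measure_inter_preimage_eq_mul univ (sets := ![{a}, {b}, {c}])
    fun i _ => by fin_cases i <;> exact measurableSet_singleton _
  simp only [measureReal_def, hfiber, this, Fin.prod_univ_three, ENNReal.toReal_mul]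
  rfl

theorem integral_comp_three_eq_sum [IsFiniteMeasure P] {X₁ X₂ X₃ : Ω → β}
    (h₁ : Measurable X₁) (h₂ : Measurable X₂) (h₃ : Measurable X₃)
    {S₁ S₂ S₃ : Finset β} (hS₁ : ∀ ω, X₁ ω ∈ S₁) (hS₂ : ∀ ω, X₂ ω ∈ S₂) (hS₃ : ∀ ω, X₃ ω ∈ S₃)
    (h : iIndepFun ![X₁, X₂, X₃] P) (F : β → β → β → ℝ) :
    ∫ ω, F (X₁ ω) (X₂ ω) (X₃ ω) ∂P
      = ∑ a ∈ S₁, P.real (X₁ ⁻¹' {a}) * ∑ b ∈ S₂, P.real (X₂ ⁻¹' {b}) *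
          ∑ c ∈ S₃, P.real (X₃ ⁻¹' {c}) * F a b c := by
  rw [integral_comp_eq_sum_of_forall_mem (F := fun x => F x.1 x.2.1 x.2.2)
    (h₁.prodMk (h₂.prodMk h₃)) fun ω => mem_product.2 ⟨hS₁ ω, mem_product.2 ⟨hS₂ ω, hS₃ ω⟩⟩]
  simp only [sum_product, h.measureReal_preimage_singleton_three, mul_sum, mul_assoc]

theorem integral_mul_comp_three_eq_sum [IsFiniteMeasure P] {X₁ X₂ X₃ : Ω → β}
    (h₁ : Measurable X₁) (h₂ : Measurable X₂) (h₃ : Measurable X₃)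
    {S₁ S₂ S₃ : Finset β} (hS₁ : ∀ ω, X₁ ω ∈ S₁) (hS₂ : ∀ ω, X₂ ω ∈ S₂) (hS₃ : ∀ ω, X₃ ω ∈ S₃)
    (h : iIndepFun ![X₁, X₂, X₃] P) (g k : β → β → ℝ) :
    ∫ ω, g (X₁ ω) (X₂ ω) * k (X₁ ω) (X₃ ω) ∂P
      = ∑ a ∈ S₁, P.real (X₁ ⁻¹' {a}) *
          ((∑ b ∈ S₂, P.real (X₂ ⁻¹' {b}) * g a b) * ∑ c ∈ S₃, P.real (X₃ ⁻¹' {c}) * k a c) := by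
  rw [integral_comp_three_eq_sum h₁ h₂ h₃ hS₁ hS₂ hS₃ h fun a b c => g a b * k a c]
  refine sum_congr rfl fun a _ => ?_
  rw [Finset.sum_mul_sum]
  simp only [mul_sum]
  exact sum_congr rfl fun b _ => sum_congr rfl fun c _ => by ring

end FiniteRange

theorem Finset.sum_mul_sub_sq {ι : Type*} {s : Finset ι} {w x : ι → ℝ} {m : ℝ}
    (hw : ∑ i ∈ s, w i = 1) (hm : ∑ i ∈ s, w i * x i = m) :
    ∑ i ∈ s, w i * (x i - m) ^ 2 = ∑ i ∈ s, w i * x i ^ 2 - m ^ 2 := by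
  have (i : ι) : w i * (x i - m) ^ 2 = w i * x i ^ 2 - 2 * m * (w i * x i) + m ^ 2 * w i := by
    ring
  simp only [this, sum_add_distrib, sum_sub_distrib, ← mul_sum, hw, hm]
  ring

theorem sum_Icc_one_sub_one_of_eq_zero {M : Type*} [AddCommMonoid M] {K : ℕ} {f : ℕ → M}
    (hf : f K = 0) : ∑ j ∈ Icc 1 (K - 1), f j = ∑ j ∈ Icc 1 K, f j := by
  rcases K with _ | K
  · rfl
  · rw [sum_Icc_succ_top (by omega), hf, add_zero, Nat.add_sub_cancel]

theorem sum_Icc_mul_doorPhi (p : ℕ → ℝ) {j K : ℕ} (hj : j ∈ Icc 1 K) :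
    ∑ l ∈ Icc 1 K, p l * doorPhi j l = ∑ l ∈ Icc (j + 1) K, p l + p j / 2 := by
  have hgt : (Icc 1 K).filter (j < ·) = Icc (j + 1) K := by
    ext l
    simp only [mem_filter, mem_Icc]
    omega
  simp only [doorPhi, mul_add, mul_div_assoc', mul_ite, mul_one, mul_zero, sum_add_distrib,
    ← sum_div, sum_ite_eq, if_pos hj]
  rw [← sum_filter, hgt]

theorem sum_Icc_mul_doorPhi_sq (p : ℕ → ℝ) {j K : ℕ} (hj : j ∈ Icc 1 K) :
    (∑ l ∈ Icc 1 K, p l * doorPhi j l) ^ 2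
      = (∑ l ∈ Icc j K, p l) * ∑ l ∈ Icc (j + 1) K, p l + p j ^ 2 / 4 := by
  have hsplit : ∑ l ∈ Icc j K, p l = p j + ∑ l ∈ Icc (j + 1) K, p l := by
    rw [Icc_add_one_left_eq_Ioc, Icc_eq_cons_Ioc (mem_Icc.1 hj).2, sum_cons]
  rw [sum_Icc_mul_doorPhi p hj, hsplit]
  ring

theorem door_covariance_shared_treated_general
    {Ω : Type*} [MeasurableSpace Ω] (P : Measure Ω) [IsProbabilityMeasure P]
    (K : ℕ)
    (Y Z₁ Z₂ : Ω → ℕ)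
    (hY : Measurable Y) (hZ₁ : Measurable Z₁) (hZ₂ : Measurable Z₂)
    (hYrange : ∀ ω, Y ω ∈ Finset.Icc 1 K)
    (hZ₁range : ∀ ω, Z₁ ω ∈ Finset.Icc 1 K)
    (hZ₂range : ∀ ω, Z₂ ω ∈ Finset.Icc 1 K)
    (hindep : iIndepFun (m := fun _ : Fin 3 => (inferInstance : MeasurableSpace ℕ))
      ![Y, Z₁, Z₂] P)
    (hiid : IdentDistrib Z₁ Z₂ P P)
    (p₁ p₂ : ℕ → ℝ)
    (hp₁ : ∀ j, p₁ j = (P {ω | Y ω = j}).toReal)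
    (hp₂ : ∀ j, p₂ j = (P {ω | Z₁ ω = j}).toReal)
    (D : ℝ) (hD : D = ∫ ω, doorPhi (Y ω) (Z₁ ω) ∂P) :
    cov P (fun ω => doorPhi (Y ω) (Z₁ ω)) (fun ω => doorPhi (Y ω) (Z₂ ω)) =
      (∑ j ∈ Finset.Icc 1 (K - 1),
          p₁ j * (∑ l ∈ Finset.Icc j K, p₂ l) * (∑ l ∈ Finset.Icc (j + 1) K, p₂ l))
        + (1 / 4) * ∑ j ∈ Finset.Icc 1 K, p₁ j * (p₂ j) ^ 2 - D ^ 2 := by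
  have hlaw₁ (j : ℕ) : P.real (Y ⁻¹' {j}) = p₁ j := (hp₁ j).symm
  have hlaw₂ (j : ℕ) : P.real (Z₁ ⁻¹' {j}) = p₂ j := (hp₂ j).symm
  have hlaw₃ (j : ℕ) : P.real (Z₂ ⁻¹' {j}) = p₂ j := by
    rw [← hlaw₂, measureReal_def, measureReal_def, hiid.measure_mem_eq (measurableSet_singleton j)]
  have hsum₁ : ∑ j ∈ Icc 1 K, p₁ j = 1 := by
    simpa only [hlaw₁] using sum_measureReal_preimage_singleton_of_forall_mem (P := P) hY hYrange
  have hsum₂ : ∑ l ∈ Icc 1 K, p₂ l = 1 := by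
    simpa only [hlaw₂] using sum_measureReal_preimage_singleton_of_forall_mem (P := P) hZ₁ hZ₁range
  have hE (g k : ℕ → ℕ → ℝ) : ∫ ω, g (Y ω) (Z₁ ω) * k (Y ω) (Z₂ ω) ∂P
      = ∑ j ∈ Icc 1 K, p₁ j * ((∑ l ∈ Icc 1 K, p₂ l * g j l) * ∑ l ∈ Icc 1 K, p₂ l * k j l) := by
    simp only [integral_mul_comp_three_eq_sum hY hZ₁ hZ₂ hYrange hZ₁range hZ₂range hindep,
      hlaw₁, hlaw₂, hlaw₃]
  set T : ℕ → ℝ := fun j => ∑ l ∈ Icc 1 K, p₂ l * doorPhi j l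
  have hD₁ : ∑ j ∈ Icc 1 K, p₁ j * T j = D := by
    simpa [hsum₂, ← hD] using (hE doorPhi fun _ _ => 1).symm
  have hD₂ : ∫ ω, doorPhi (Y ω) (Z₂ ω) ∂P = D := by
    have h := hE (fun _ _ => 1) doorPhi
    simp only [mul_one, hsum₂, one_mul] at h
    exact h.trans hD₁
  have hcentered (j : ℕ) : ∑ l ∈ Icc 1 K, p₂ l * (doorPhi j l - D) = T j - D := by
    simp only [mul_sub, sum_sub_distrib, ← sum_mul, hsum₂, one_mul, T]
  have hcov : cov P (fun ω => doorPhi (Y ω) (Z₁ ω)) (fun ω => doorPhi (Y ω) (Z₂ ω))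
      = ∑ j ∈ Icc 1 K, p₁ j * (T j - D) ^ 2 := by
    rw [cov, ← hD, hD₂, hE (fun j l => doorPhi j l - D) fun j l => doorPhi j l - D]
    simp only [hcentered, sq]
  have hsq (j : ℕ) (hj : j ∈ Icc 1 K) : p₁ j * T j ^ 2
      = p₁ j * (∑ l ∈ Icc j K, p₂ l) * (∑ l ∈ Icc (j + 1) K, p₂ l) + 1 / 4 * (p₁ j * p₂ j ^ 2) := by
    rw [sum_Icc_mul_doorPhi_sq p₂ hj]
    ring
  rw [hcov, sum_mul_sub_sq hsum₁ hD₁, sum_congr rfl hsq, sum_add_distrib, ← mul_sum,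
    sum_Icc_one_sub_one_of_eq_zero (by simp)]

/-- For `Y` with values in `{1,…,K}` and i.i.d. `Z₁, Z₂` with values in
`{1,…,K}`, with `Y, Z₁, Z₂` mutually independent, `p₁(j) = P(Y=j)`, `p₂(j) = P(Z₁=j)`, and
`D = E[φ(Y,Z₁)]`, the covariance with a shared treated observation satisfies
`Cov(φ(Y,Z₁), φ(Y,Z₂)) = ∑_{j=1}^{K−1} p₁(j)(∑_{l=j}^{K} p₂(l))(∑_{l=j+1}^{K} p₂(l))
  + (1/4)∑_{j=1}^{K} p₁(j) p₂(j)² − D²`. -/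
theorem door_covariance_shared_treated
    {Ω : Type*} [MeasurableSpace Ω] (P : Measure Ω) [IsProbabilityMeasure P]
    (K : ℕ) (hK : 1 ≤ K)
    (Y Z₁ Z₂ : Ω → ℕ)
    (hY : Measurable Y) (hZ₁ : Measurable Z₁) (hZ₂ : Measurable Z₂)
    (hYrange : ∀ ω, Y ω ∈ Finset.Icc 1 K)
    (hZ₁range : ∀ ω, Z₁ ω ∈ Finset.Icc 1 K)
    (hZ₂range : ∀ ω, Z₂ ω ∈ Finset.Icc 1 K)
    (hindep : iIndepFun (m := fun _ : Fin 3 => (inferInstance : MeasurableSpace ℕ))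
      ![Y, Z₁, Z₂] P)
    (hiid : IdentDistrib Z₁ Z₂ P P)
    (p₁ p₂ : ℕ → ℝ)
    (hp₁ : ∀ j, p₁ j = (P {ω | Y ω = j}).toReal)
    (hp₂ : ∀ j, p₂ j = (P {ω | Z₁ ω = j}).toReal)
    (D : ℝ) (hD : D = ∫ ω, doorPhi (Y ω) (Z₁ ω) ∂P) :
    cov P (fun ω => doorPhi (Y ω) (Z₁ ω)) (fun ω => doorPhi (Y ω) (Z₂ ω)) =
      (∑ j ∈ Finset.Icc 1 (K - 1),
          p₁ j * (∑ l ∈ Finset.Icc j K, p₂ l) * (∑ l ∈ Finset.Icc (j + 1) K, p₂ l))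
        + (1 / 4) * ∑ j ∈ Finset.Icc 1 K, p₁ j * (p₂ j) ^ 2 - D ^ 2 :=
  door_covariance_shared_treated_general P K Y Z₁ Z₂ hY hZ₁ hZ₂ hYrange hZ₁range hZ₂range hindep
    hiid p₁ p₂ hp₁ hp₂ D hD
end

section
/- Let K ≥ 1, let Y₁, Y₂ be i.i.d. random variables with values in {1,…,K}, and let Z be a random variable with values in {1,…,K}, with Y₁, Y₂, Z mutually independent. With φ(y,y') = 1{y < y'} + (1/2)·1{y = y'}, p₁(j) = P(Y₁ = j), p₂(j) = P(Z = j), and D = E[φ(Y₁,Z)], the covariance with a shared control observation satisfies Cov(φ(Y₁,Z), φ(Y₂,Z)) = Σ_{l=1}^{K−1} p₂(l)·(Σ_{j=l}^{K} p₁(j))·(Σ_{j=l+1}^{K} p₁(j)) + (1/4) Σ_{l=1}^{K} p₂(l)·p₁(l)² − (1 − D)². -/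
/-!
Conditionally on the shared control `Z = l`, the scores `φ(Y₁, l)` and `φ(Y₂, l)` are
independent with common mean `A(l) = P(Y₁ < l) + P(Y₁ = l) / 2`, so
`E[φ(Y₁,Z) φ(Y₂,Z)] = ∑ₗ p₂(l) A(l)²` while `D = ∑ₗ p₂(l) A(l)`.
With the tails `T(l) = ∑_{j ≥ l} p₁(j)` one has `A(l) = 1 - (T(l) + T(l+1)) / 2` and
`p₁(l) = T(l) - T(l+1)`, whence `A(l)² = T(l) T(l+1) + p₁(l)² / 4 + 2 A(l) - 1`;
averaging against `p₂` and subtracting `D²` gives the formula, the term `l = K` dropping out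
because `T(K+1) = 0`.
-/

open MeasureTheory ProbabilityTheory Finset

lemma doorPhi_nonneg (y y' : ℕ) : 0 ≤ doorPhi y y' := by
  unfold doorPhi; split_ifs <;> norm_num

lemma doorPhi_le_one (y y' : ℕ) : doorPhi y y' ≤ 1 := by
  unfold doorPhi; split_ifs <;> first | omega | norm_num

lemma doorPhi_add_ge_add_gt (y y' : ℕ) :
    doorPhi y y' + ((if y' ≤ y then 1 else 0) + (if y' < y then 1 else 0)) / 2 = 1 := by
  unfold doorPhi; split_ifs <;> first | omega | norm_num

noncomputable def doorPhiMean (K : ℕ) (p : ℕ → ℝ) (l : ℕ) : ℝ :=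
  ∑ j ∈ Icc 1 K, doorPhi j l * p j

section Tails

variable {K : ℕ} {p : ℕ → ℝ}

lemma doorPhiMean_eq_one_sub_tails (hp : ∑ j ∈ Icc 1 K, p j = 1) {l : ℕ} (hl : 1 ≤ l) :
    doorPhiMean K p l = 1 - (∑ j ∈ Icc l K, p j + ∑ j ∈ Icc (l + 1) K, p j) / 2 := by
  have hge : ∑ j ∈ Icc l K, p j = ∑ j ∈ Icc 1 K, if l ≤ j then p j else 0 := by
    rw [← sum_filter]; congr 1; ext j; simp only [mem_Icc, mem_filter]; omega
  have hgt : ∑ j ∈ Icc (l + 1) K, p j = ∑ j ∈ Icc 1 K, if l < j then p j else 0 := by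
    rw [← sum_filter]; congr 1; ext j; simp only [mem_Icc, mem_filter]; omega
  rw [hge, hgt, ← hp, doorPhiMean, eq_sub_iff_add_eq, ← sum_add_distrib, sum_div,
    ← sum_add_distrib]
  refine sum_congr rfl fun j _ => ?_
  have := doorPhi_add_ge_add_gt j l
  split_ifs at this ⊢ <;> linear_combination p j * this

lemma sum_Icc_eq_add_sum_Icc_succ {l : ℕ} (hl : l ≤ K) :
    ∑ j ∈ Icc l K, p j = p l + ∑ j ∈ Icc (l + 1) K, p j := by
  rw [Icc_add_one_left_eq_Ioc, add_sum_Ioc_eq_sum_Icc hl]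

lemma sum_mul_doorPhiMean_sq (hK : 1 ≤ K) (hp : ∑ j ∈ Icc 1 K, p j = 1) (q : ℕ → ℝ) :
    ∑ l ∈ Icc 1 K, q l * doorPhiMean K p l ^ 2 =
      ∑ l ∈ Icc 1 (K - 1), q l * (∑ j ∈ Icc l K, p j) * (∑ j ∈ Icc (l + 1) K, p j)
        + 1 / 4 * ∑ l ∈ Icc 1 K, q l * p l ^ 2
        + (2 * ∑ l ∈ Icc 1 K, q l * doorPhiMean K p l - ∑ l ∈ Icc 1 K, q l) := by
  have hterm : ∀ l ∈ Icc 1 K, q l * doorPhiMean K p l ^ 2 =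
      q l * (∑ j ∈ Icc l K, p j) * (∑ j ∈ Icc (l + 1) K, p j) + 1 / 4 * (q l * p l ^ 2)
        + (2 * (q l * doorPhiMean K p l) - q l) := by
    intro l hl
    rw [mem_Icc] at hl
    rw [doorPhiMean_eq_one_sub_tails hp hl.1, sum_Icc_eq_add_sum_Icc_succ hl.2]
    ring
  have hlast : ∑ l ∈ Icc 1 K, q l * (∑ j ∈ Icc l K, p j) * (∑ j ∈ Icc (l + 1) K, p j) =
      ∑ l ∈ Icc 1 (K - 1), q l * (∑ j ∈ Icc l K, p j) * (∑ j ∈ Icc (l + 1) K, p j) := by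
    obtain ⟨m, rfl⟩ : ∃ m, K = m + 1 := ⟨K - 1, by omega⟩
    rw [sum_Icc_succ_top (by omega), Icc_eq_empty_of_lt (Nat.lt_succ_self _)]
    simp
  rw [sum_congr rfl hterm, sum_add_distrib, sum_add_distrib, sum_sub_distrib, hlast, ← mul_sum,
    ← mul_sum]

end Tails

section Fibers

variable {Ω ι : Type*} [MeasurableSpace Ω] {P : Measure Ω} {Z : Ω → ι} {s : Finset ι}

lemma integral_eq_sum_setIntegral_fiber (hZs : ∀ ω, Z ω ∈ s)
    (hZ : ∀ l ∈ s, MeasurableSet {ω | Z ω = l}) (F : ι → Ω → ℝ)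
    (hF : ∀ l ∈ s, Integrable (F l) P) :
    ∫ ω, F (Z ω) ω ∂P = ∑ l ∈ s, ∫ ω in {ω | Z ω = l}, F l ω ∂P := by
  classical
  have hsum : ∀ ω, F (Z ω) ω = ∑ l ∈ s, {ω | Z ω = l}.indicator (F l) ω := by
    intro ω
    simp only [Set.indicator_apply, Set.mem_ofPred_eq]
    rw [Finset.sum_ite_eq s (Z ω) (fun l => F l ω), if_pos (hZs ω)]
  simp_rw [hsum]
  rw [integral_finsetSum _ fun l hl => (hF l hl).indicator (hZ l hl)]
  exact Finset.sum_congr rfl fun l hl => integral_indicator (hZ l hl)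

lemma integral_comp_eq_sum [IsFiniteMeasure P] (hZs : ∀ ω, Z ω ∈ s)
    (hZ : ∀ l ∈ s, MeasurableSet {ω | Z ω = l}) (g : ι → ℝ) :
    ∫ ω, g (Z ω) ∂P = ∑ l ∈ s, P.real {ω | Z ω = l} * g l := by
  rw [integral_eq_sum_setIntegral_fiber hZs hZ (fun l _ => g l) fun l _ => integrable_const _]
  simp_rw [setIntegral_const, smul_eq_mul]

lemma sum_measureReal_fiber [IsProbabilityMeasure P] (hZs : ∀ ω, Z ω ∈ s)
    (hZ : ∀ l ∈ s, MeasurableSet {ω | Z ω = l}) :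
    ∑ l ∈ s, P.real {ω | Z ω = l} = 1 := by
  simpa using (integral_comp_eq_sum (P := P) hZs hZ fun _ => 1).symm

lemma integral_comp_eq_sum_of_indepFun {α : Type*} [MeasurableSpace α]
    [MeasurableSpace ι] [MeasurableSingletonClass ι] {X : Ω → α}
    (hXZ : IndepFun X Z P) (hX : Measurable X) (hZ : Measurable Z) (hZs : ∀ ω, Z ω ∈ s)
    (F : α → ι → ℝ) (hFm : ∀ l, Measurable fun x => F x l)
    (hF : ∀ l ∈ s, Integrable (fun ω => F (X ω) l) P) :
    ∫ ω, F (X ω) (Z ω) ∂P = ∑ l ∈ s, P.real {ω | Z ω = l} * ∫ ω, F (X ω) l ∂P := by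
  have hfib : ∀ l, MeasurableSet {ω | Z ω = l} := fun l => hZ (measurableSet_singleton l)
  rw [integral_eq_sum_setIntegral_fiber hZs (fun l _ => hfib l) (fun l ω => F (X ω) l) hF]
  refine Finset.sum_congr rfl fun l _ => ?_
  have hindep := hXZ.symm.integral_comp_mul_comp hZ.aemeasurable hX.aemeasurable
    (f := ({l} : Set ι).indicator 1) (g := fun x => F x l)
    ((measurable_const.indicator (measurableSet_singleton l)).aestronglyMeasurable)
    (hFm l).aestronglyMeasurable
  have hfib_one : ((({l} : Set ι).indicator 1 ∘ Z) : Ω → ℝ) = {ω | Z ω = l}.indicator 1 := by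
    ext ω; by_cases h : Z ω = l <;> simp [h]
  rw [hfib_one, integral_indicator_one (hfib l)] at hindep
  have hsplit : {ω | Z ω = l}.indicator (fun ω => F (X ω) l)
      = {ω | Z ω = l}.indicator 1 * ((fun x => F x l) ∘ X) := by
    ext ω; by_cases h : Z ω = l <;> simp [h]
  rw [← integral_indicator (hfib l), hsplit, hindep]
  rfl

end Fibers

section DoorMoments

variable {Ω : Type*} [MeasurableSpace Ω] {P : Measure Ω} [IsFiniteMeasure P] {K : ℕ}
  {p q : ℕ → ℝ} {Y Y' Z : Ω → ℕ}

lemma memLp_doorPhi_comp {X : Ω → ℕ} (hX : Measurable X) (hY : Measurable Y) (r : ENNReal) :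
    MemLp (fun ω => doorPhi (X ω) (Y ω)) r P := by
  refine MemLp.of_bound ((measurable_of_countable (Function.uncurry doorPhi)).comp
    (hX.prodMk hY)).aestronglyMeasurable 1 (ae_of_all _ fun ω => ?_)
  rw [Real.norm_eq_abs, abs_of_nonneg (doorPhi_nonneg _ _)]
  exact doorPhi_le_one _ _


lemma integral_doorPhi_const (hY : Measurable Y) (hYs : ∀ ω, Y ω ∈ Icc 1 K)
    (hp : ∀ j, p j = P.real {ω | Y ω = j}) (l : ℕ) :
    ∫ ω, doorPhi (Y ω) l ∂P = doorPhiMean K p l := by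
  rw [integral_comp_eq_sum hYs (fun j _ => hY (measurableSet_singleton j)) (doorPhi · l)]
  exact sum_congr rfl fun j _ => by rw [hp, mul_comm]

lemma integral_doorPhi_of_indepFun (hYZ : IndepFun Y Z P) (hY : Measurable Y) (hZ : Measurable Z)
    (hYs : ∀ ω, Y ω ∈ Icc 1 K) (hZs : ∀ ω, Z ω ∈ Icc 1 K)
    (hp : ∀ j, p j = P.real {ω | Y ω = j}) (hq : ∀ l, q l = P.real {ω | Z ω = l}) :
    ∫ ω, doorPhi (Y ω) (Z ω) ∂P = ∑ l ∈ Icc 1 K, q l * doorPhiMean K p l := by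
  rw [integral_comp_eq_sum_of_indepFun hYZ hY hZ hZs doorPhi (fun _ => measurable_of_countable _)
    fun _ _ => (memLp_doorPhi_comp hY measurable_const 1).integrable le_rfl]
  exact sum_congr rfl fun l _ => by rw [hq, integral_doorPhi_const hY hYs hp]

lemma integral_doorPhi_mul_doorPhi_of_indepFun (hYY' : IndepFun Y Y' P)
    (hYY'Z : IndepFun (fun ω => (Y ω, Y' ω)) Z P)
    (hY : Measurable Y) (hY' : Measurable Y') (hZ : Measurable Z)
    (hYs : ∀ ω, Y ω ∈ Icc 1 K) (hY's : ∀ ω, Y' ω ∈ Icc 1 K) (hZs : ∀ ω, Z ω ∈ Icc 1 K)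
    (hp : ∀ j, p j = P.real {ω | Y ω = j}) (hp' : ∀ j, p j = P.real {ω | Y' ω = j})
    (hq : ∀ l, q l = P.real {ω | Z ω = l}) :
    ∫ ω, doorPhi (Y ω) (Z ω) * doorPhi (Y' ω) (Z ω) ∂P =
      ∑ l ∈ Icc 1 K, q l * doorPhiMean K p l ^ 2 := by
  rw [integral_comp_eq_sum_of_indepFun hYY'Z (hY.prodMk hY') hZ hZs
    (fun y l => doorPhi y.1 l * doorPhi y.2 l) (fun _ => measurable_of_countable _)
    fun _ _ => (memLp_doorPhi_comp hY measurable_const 2).integrable_mul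
      (memLp_doorPhi_comp hY' measurable_const 2)]
  refine sum_congr rfl fun l _ => ?_
  have hprod : ∫ ω, doorPhi (Y ω) l * doorPhi (Y' ω) l ∂P =
      (∫ ω, doorPhi (Y ω) l ∂P) * ∫ ω, doorPhi (Y' ω) l ∂P :=
    hYY'.integral_comp_mul_comp hY.aemeasurable hY'.aemeasurable
      (measurable_of_countable (doorPhi · l)).aestronglyMeasurable
      (measurable_of_countable (doorPhi · l)).aestronglyMeasurable
  rw [hq, hprod, integral_doorPhi_const hY hYs hp, integral_doorPhi_const hY' hY's hp', sq]

end DoorMoments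

/-- For i.i.d. `Y₁, Y₂` with values in `{1,…,K}` and `Z` with values in
`{1,…,K}`, with `Y₁, Y₂, Z` mutually independent, `p₁(j) = P(Y₁=j)`, `p₂(j) = P(Z=j)`, and
`D = E[φ(Y₁,Z)]`, the covariance with a shared control observation satisfies
`Cov(φ(Y₁,Z), φ(Y₂,Z)) = ∑_{l=1}^{K−1} p₂(l)(∑_{j=l}^{K} p₁(j))(∑_{j=l+1}^{K} p₁(j))
  + (1/4)∑_{l=1}^{K} p₂(l) p₁(l)² − (1 − D)²`. -/
theorem door_covariance_shared_control
    {Ω : Type*} [MeasurableSpace Ω] (P : Measure Ω) [IsProbabilityMeasure P]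
    (K : ℕ) (hK : 1 ≤ K)
    (Y₁ Y₂ Z : Ω → ℕ)
    (hY₁ : Measurable Y₁) (hY₂ : Measurable Y₂) (hZ : Measurable Z)
    (hY₁range : ∀ ω, Y₁ ω ∈ Finset.Icc 1 K)
    (hY₂range : ∀ ω, Y₂ ω ∈ Finset.Icc 1 K)
    (hZrange : ∀ ω, Z ω ∈ Finset.Icc 1 K)
    (hindep : iIndepFun (β := fun _ : Fin 3 => ℕ)
      ![Y₁, Y₂, Z] P)
    (hiid : IdentDistrib Y₁ Y₂ P P)
    (p₁ p₂ : ℕ → ℝ)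
    (hp₁ : ∀ j, p₁ j = (P {ω | Y₁ ω = j}).toReal)
    (hp₂ : ∀ j, p₂ j = (P {ω | Z ω = j}).toReal)
    (D : ℝ) (hD : D = ∫ ω, doorPhi (Y₁ ω) (Z ω) ∂P) :
    cov P (fun ω => doorPhi (Y₁ ω) (Z ω)) (fun ω => doorPhi (Y₂ ω) (Z ω)) =
      (∑ l ∈ Finset.Icc 1 (K - 1),
          p₂ l * (∑ j ∈ Finset.Icc l K, p₁ j) * (∑ j ∈ Finset.Icc (l + 1) K, p₁ j))
        + (1 / 4) * ∑ l ∈ Finset.Icc 1 K, p₂ l * (p₁ l) ^ 2 - (1 - D) ^ 2 := by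
  have hp₁' : ∀ j, p₁ j = P.real {ω | Y₂ ω = j} := fun j =>
    (hp₁ j).trans (congrArg ENNReal.toReal (hiid.measure_mem_eq (measurableSet_singleton j)))
  have hp₁_sum : ∑ j ∈ Icc 1 K, p₁ j = 1 := by
    simp_rw [hp₁]; exact sum_measureReal_fiber hY₁range fun j _ => hY₁ (measurableSet_singleton j)
  have hp₂_sum : ∑ l ∈ Icc 1 K, p₂ l = 1 := by
    simp_rw [hp₂]; exact sum_measureReal_fiber hZrange fun l _ => hZ (measurableSet_singleton l)
  have hmeas : ∀ i, Measurable (![Y₁, Y₂, Z] i) := fun i => by fin_cases i <;> assumption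
  have h12 : IndepFun Y₁ Y₂ P := hindep.indepFun (i := 0) (j := 1) (by decide)
  have h1Z : IndepFun Y₁ Z P := hindep.indepFun (i := 0) (j := 2) (by decide)
  have h2Z : IndepFun Y₂ Z P := hindep.indepFun (i := 1) (j := 2) (by decide)
  have h12Z : IndepFun (fun ω => (Y₁ ω, Y₂ ω)) Z P :=
    hindep.indepFun_prodMk hmeas 0 1 2 (by decide) (by decide)
  have hE₁ := integral_doorPhi_of_indepFun h1Z hY₁ hZ hY₁range hZrange hp₁ hp₂
  change covariance _ _ P = _
  rw [covariance_eq_sub (memLp_doorPhi_comp hY₁ hZ 2) (memLp_doorPhi_comp hY₂ hZ 2)]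
  simp only [Pi.mul_apply]
  rw [integral_doorPhi_mul_doorPhi_of_indepFun h12 h12Z hY₁ hY₂ hZ hY₁range hY₂range hZrange
      hp₁ hp₁' hp₂,
    integral_doorPhi_of_indepFun h2Z hY₂ hZ hY₂range hZrange hp₁' hp₂, hD, hE₁,
    sum_mul_doorPhiMean_sq hK hp₁_sum, hp₂_sum]
  ring
end
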